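/- Let H ∈ ℂ^{B×U}, ρ > 0, h_u the u-th column of H, and let X ⊆ ℂ be a finite nonempty set. A vector x ∈ X^B minimizes the quantity (‖H^H x‖₂² + ρ‖x‖₂²)/|h_u^H x|² over all x̃ ∈ X^B with h_u^H x̃ ≠ 0 if and only if the pair (β(x), x) with β(x) = (x^H h_u)/(‖H^H x‖₂² + ρ‖x‖₂²) minimizes ‖e_u − β̃ H^H x̃‖₂² + ρ‖β̃ x̃‖₂² over all (β̃, x̃) ∈ ℂ × X^B with h_u^H x̃ ≠ 0. -/
import Mathlib
open Matrix Complex BigOperators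

lemma aux_sum {U : ℕ} (u : Fin U) (m : Fin U → ℂ) (β : ℂ) :
    ∑ v, Complex.normSq ((if v = u then (1:ℂ) else 0) - β * m v)
      = 1 - 2 * (β * m u).re + Complex.normSq β * ∑ v, Complex.normSq (m v) := by
  have h : ∀ v ∈ Finset.univ, Complex.normSq ((if v = u then (1:ℂ) else 0) - β * m v)
      = (if v = u then (1 - 2 * (β * m u).re) else 0)
        + Complex.normSq β * Complex.normSq (m v) := by
    intro v _
    by_cases hv : v = u
    · subst hv
      simp [Complex.normSq_sub, Complex.normSq_mul]
      ring
    · simp [hv, Complex.normSq_mul]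
  rw [Finset.sum_congr rfl h, Finset.sum_add_distrib, Finset.sum_ite_eq' Finset.univ u,
    ← Finset.mul_sum]
  simp

lemma aux_quad (s : ℂ) (Dr : ℝ) (hD : 0 < Dr) (β : ℂ) :
    1 - Complex.normSq s / Dr ≤ 1 - 2 * (β * s).re + Complex.normSq β * Dr := by
  have h : (1 - Complex.normSq s / Dr) * Dr
      ≤ (1 - 2 * (β * s).re + Complex.normSq β * Dr) * Dr := by
    rw [sub_mul, div_mul_cancel₀ _ hD.ne']
    rw [Complex.normSq_apply, Complex.normSq_apply, Complex.mul_re]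
    nlinarith [sq_nonneg (β.re * Dr - s.re), sq_nonneg (β.im * Dr + s.im)]
  exact le_of_mul_le_mul_right h hD

lemma aux_opt (s : ℂ) (Dr : ℝ) (hD : 0 < Dr) :
    1 - 2 * (((starRingEnd ℂ) s / (Dr:ℂ)) * s).re
        + Complex.normSq ((starRingEnd ℂ) s / (Dr:ℂ)) * Dr
      = 1 - Complex.normSq s / Dr := by
  have h1 : ((starRingEnd ℂ) s / (Dr:ℂ)) * s = ((Complex.normSq s / Dr : ℝ) : ℂ) := by
    rw [div_mul_eq_mul_div, Complex.ofReal_div]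
    congr 1
    rw [mul_comm, Complex.mul_conj]
  rw [h1, Complex.ofReal_re, Complex.normSq_div, Complex.normSq_conj, Complex.normSq_ofReal]
  field_simp
  ring

theorem stmt5 {B U : ℕ} (hB : 0 < B) (hU : 0 < U)
    (H : Matrix (Fin B) (Fin U) ℂ) (ρ : ℝ) (hρ : 0 < ρ) (u : Fin U)
    (X : Finset ℂ) (hX : X.Nonempty)
    (x : Fin B → ℂ) (hxX : ∀ i, x i ∈ X) (hux : (∑ b, star (H b u) * x b) ≠ 0)
    (β : ℂ)
    (hβ : β = (∑ b, star (x b) * H b u) /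
      (((∑ v, Complex.normSq ((Hᴴ *ᵥ x) v)) + ρ * ∑ b, Complex.normSq (x b) : ℝ) : ℂ)) :
    (∀ x' : Fin B → ℂ, (∀ i, x' i ∈ X) → (∑ b, star (H b u) * x' b) ≠ 0 →
        ((∑ v, Complex.normSq ((Hᴴ *ᵥ x) v)) + ρ * ∑ b, Complex.normSq (x b)) /
            Complex.normSq (∑ b, star (H b u) * x b)
          ≤ ((∑ v, Complex.normSq ((Hᴴ *ᵥ x') v)) + ρ * ∑ b, Complex.normSq (x' b)) /
            Complex.normSq (∑ b, star (H b u) * x' b))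
    ↔
    (∀ (β' : ℂ) (x' : Fin B → ℂ), (∀ i, x' i ∈ X) → (∑ b, star (H b u) * x' b) ≠ 0 →
        (∑ v, Complex.normSq ((if v = u then (1 : ℂ) else 0) - β * (Hᴴ *ᵥ x) v))
            + ρ * Complex.normSq β * ∑ b, Complex.normSq (x b)
          ≤ (∑ v, Complex.normSq ((if v = u then (1 : ℂ) else 0) - β' * (Hᴴ *ᵥ x') v))
            + ρ * Complex.normSq β' * ∑ b, Complex.normSq (x' b)) := by
  -- notation
  set s : (Fin B → ℂ) → ℂ := fun y => ∑ b, star (H b u) * y b with hs_def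
  set 𝒟 : (Fin B → ℂ) → ℝ :=
    fun y => (∑ v, Complex.normSq ((Hᴴ *ᵥ y) v)) + ρ * ∑ b, Complex.normSq (y b) with hD_def
  -- s y = (Hᴴ *ᵥ y) u
  have hsv : ∀ y : Fin B → ℂ, s y = (Hᴴ *ᵥ y) u := by
    intro y
    simp [hs_def, Matrix.mulVec, dotProduct, Matrix.conjTranspose_apply]
  -- positivity of 𝒟
  have hDpos : ∀ y : Fin B → ℂ, s y ≠ 0 → 0 < 𝒟 y := by
    intro y hy
    have h1 : Complex.normSq ((Hᴴ *ᵥ y) u) ≤ ∑ v, Complex.normSq ((Hᴴ *ᵥ y) v) :=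
      Finset.single_le_sum (fun i _ => Complex.normSq_nonneg _) (Finset.mem_univ u)
    have h2 : 0 < Complex.normSq ((Hᴴ *ᵥ y) u) := by
      rw [← hsv y]; exact Complex.normSq_pos.mpr hy
    have h3 : 0 ≤ ∑ b, Complex.normSq (y b) :=
      Finset.sum_nonneg fun i _ => Complex.normSq_nonneg _
    have := mul_nonneg hρ.le h3
    simp only [hD_def]
    linarith
  -- objective value J β' y
  have hJ : ∀ (β' : ℂ) (y : Fin B → ℂ),
      (∑ v, Complex.normSq ((if v = u then (1 : ℂ) else 0) - β' * (Hᴴ *ᵥ y) v))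
          + ρ * Complex.normSq β' * ∑ b, Complex.normSq (y b)
        = 1 - 2 * (β' * s y).re + Complex.normSq β' * 𝒟 y := by
    intro β' y
    rw [aux_sum u (fun v => (Hᴴ *ᵥ y) v) β', hsv y]
    simp only [hD_def]
    ring
  -- β is optimal for x
  have hβ' : β = (starRingEnd ℂ) (s x) / ((𝒟 x : ℝ) : ℂ) := by
    rw [hβ]
    congr 1
    rw [map_sum]
    refine Finset.sum_congr rfl fun b _ => ?_
    simp [mul_comm]
  have hDx : 0 < 𝒟 x := hDpos x hux
  have hJx : (∑ v, Complex.normSq ((if v = u then (1 : ℂ) else 0) - β * (Hᴴ *ᵥ x) v))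
        + ρ * Complex.normSq β * ∑ b, Complex.normSq (x b)
      = 1 - Complex.normSq (s x) / 𝒟 x := by
    rw [hJ β x, hβ', aux_opt (s x) (𝒟 x) hDx]
  -- ratio flip
  have hflip : ∀ y : Fin B → ℂ, s y ≠ 0 →
      (𝒟 x / Complex.normSq (s x) ≤ 𝒟 y / Complex.normSq (s y)
        ↔ 1 - Complex.normSq (s x) / 𝒟 x ≤ 1 - Complex.normSq (s y) / 𝒟 y) := by
    intro y hy
    have hNx : 0 < Complex.normSq (s x) := Complex.normSq_pos.mpr hux
    have hNy : 0 < Complex.normSq (s y) := Complex.normSq_pos.mpr hy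
    have hDy : 0 < 𝒟 y := hDpos y hy
    rw [div_le_div_iff₀ hNx hNy, sub_le_sub_iff_left, div_le_div_iff₀ hDy hDx]
    constructor <;> intro h <;> nlinarith
  constructor
  · -- ratio min → joint min
    intro hmin β' x' hx'X hs'
    have hDx' : 0 < 𝒟 x' := hDpos x' hs'
    rw [hJx, hJ β' x']
    have h1 : 1 - Complex.normSq (s x) / 𝒟 x ≤ 1 - Complex.normSq (s x') / 𝒟 x' :=
      (hflip x' hs').mp (hmin x' hx'X hs')
    exact h1.trans (aux_quad (s x') (𝒟 x') hDx' β')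
  · -- joint min → ratio min
    intro hmin x' hx'X hs'
    have hDx' : 0 < 𝒟 x' := hDpos x' hs'
    have h := hmin ((starRingEnd ℂ) (s x') / ((𝒟 x' : ℝ) : ℂ)) x' hx'X hs'
    rw [hJx, hJ _ x', aux_opt (s x') (𝒟 x') hDx'] at h
    exact (hflip x' hs').mpr h
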